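/- Let z, z' ∈ ℂ with |z|² < R and |z'|² < R. Then the ℓ² inner product of the corresponding q-coherent states is ⟨c_{z'}, c_z⟩ = (e_q(|z'|²) e_q(|z|²))^{-1/2} · e_q(conj(z') z) (note |conj(z') z| < R so the right-hand side is defined). In particular ⟨c_z, c_z⟩ = 1, i.e. each q-coherent state is normalized. -/

import Mathlib

open scoped BigOperators

/-- The q-number `[n]_q = (1 - q^n)/(1 - q)`. -/
noncomputable def qnum (q : ℝ) (n : ℕ) : ℝ := (1 - q ^ n) / (1 - q)

/-- The q-factorial `[n]_q! = [1]_q [2]_q ⋯ [n]_q`, with `[0]_q! = 1`. -/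
noncomputable def qfact (q : ℝ) : ℕ → ℝ
  | 0 => 1
  | n + 1 => qfact q n * qnum q (n + 1)

/-- The complex q-exponential `e_q(w) = ∑ w^n/[n]_q!`. -/
noncomputable def qexC (q : ℝ) (w : ℂ) : ℂ := ∑' n : ℕ, w ^ n / (qfact q n : ℂ)

/-- The real q-exponential `e_q(x) = ∑ x^n/[n]_q!`. -/
noncomputable def qexR (q : ℝ) (x : ℝ) : ℝ := ∑' n : ℕ, x ^ n / qfact q n

/-- The normalized q-coherent state `c_z(n) = e_q(|z|²)^{-1/2} z^n / √([n]_q!)`. -/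
noncomputable def coh (q : ℝ) (z : ℂ) (n : ℕ) : ℂ :=
  (((Real.sqrt (qexR q (‖z‖ ^ 2)))⁻¹ : ℝ) : ℂ) * z ^ n / ((Real.sqrt (qfact q n) : ℝ) : ℂ)

/-!
The `n`-th term of `∑ conj(c_{z'}(n)) c_z(n)` is `(e_q(|z'|²) e_q(|z|²))^{-1/2}` times the
`n`-th term of `e_q(conj(z') z)`, so the overlap formula holds termwise. Normalization then
needs `e_q(|z|²) ≠ 0`: since `[n]_q → R`, the ratio test makes the series of `e_q(x)` converge
for `0 ≤ x < R`, and its constant term gives `e_q(x) ≥ 1`.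
-/

section QExponential

variable {q : ℝ}

theorem qnum_succ_pos (hq : |q| < 1) (n : ℕ) : 0 < qnum q (n + 1) := by
  have hpow : q ^ (n + 1) < 1 := (le_abs_self _).trans_lt (by
    rw [abs_pow]; exact pow_lt_one₀ (abs_nonneg q) hq n.succ_ne_zero)
  exact div_pos (by linarith) (by linarith [(abs_lt.mp hq).2])

theorem qfact_pos (hq : |q| < 1) (n : ℕ) : 0 < qfact q n := by
  induction n with
  | zero => exact one_pos
  | succ n ih => exact mul_pos ih (qnum_succ_pos hq n)

theorem tendsto_qnum (hq : |q| < 1) :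
    Filter.Tendsto (qnum q) Filter.atTop (nhds (1 / (1 - q))) := by
  change Filter.Tendsto (fun n : ℕ => (1 - q ^ n) / (1 - q)) _ _
  have h := ((tendsto_const_nhds (x := (1 : ℝ))).sub
    (tendsto_pow_atTop_nhds_zero_of_abs_lt_one hq)).div_const (1 - q)
  simpa only [sub_zero] using h

theorem summable_pow_div_qfact (hq : |q| < 1) {x : ℝ} (hx : |x| < 1 / (1 - q)) :
    Summable (fun n : ℕ => x ^ n / qfact q n) := by
  have h1q : 0 < 1 - q := by linarith [(abs_lt.mp hq).2]
  have hratio : Filter.Tendsto (fun n : ℕ => |x| / qnum q (n + 1)) Filter.atTop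
      (nhds (|x| / (1 / (1 - q)))) :=
    tendsto_const_nhds.div ((tendsto_qnum hq).comp (Filter.tendsto_add_atTop_nat 1))
      (by positivity)
  have hlim : |x| / (1 / (1 - q)) < 1 := by rwa [div_lt_one (by positivity)]
  obtain ⟨r, hlr, hr⟩ := exists_between hlim
  refine summable_of_ratio_norm_eventually_le hr ?_
  filter_upwards [hratio.eventually (gt_mem_nhds hlr)] with n hn
  have hfact : qfact q (n + 1) = qfact q n * qnum q (n + 1) := rfl
  have hfn := qfact_pos hq n
  have hqn := qnum_succ_pos hq n
  calc ‖x ^ (n + 1) / qfact q (n + 1)‖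
      = |x| / qnum q (n + 1) * ‖x ^ n / qfact q n‖ := by
        rw [Real.norm_eq_abs, Real.norm_eq_abs, abs_div, abs_div, abs_pow, abs_pow,
          abs_of_pos hfn, abs_of_pos (qfact_pos hq (n + 1)), hfact]
        field_simp
        ring
    _ ≤ r * ‖x ^ n / qfact q n‖ := by gcongr

theorem qexR_nonneg (hq : |q| < 1) {x : ℝ} (hx : 0 ≤ x) : 0 ≤ qexR q x :=
  tsum_nonneg fun n => div_nonneg (pow_nonneg hx n) (qfact_pos hq n).le

theorem one_le_qexR (hq : |q| < 1) {x : ℝ} (hx0 : 0 ≤ x) (hx : x < 1 / (1 - q)) :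
    1 ≤ qexR q x := by
  have hs := summable_pow_div_qfact hq (x := x) (by rwa [abs_of_nonneg hx0])
  simpa [qexR, qfact] using
    hs.le_tsum 0 fun n _ => div_nonneg (pow_nonneg hx0 n) (qfact_pos hq n).le

theorem qexC_ofReal (q x : ℝ) : qexC q x = qexR q x := by
  simp only [qexC, qexR, Complex.ofReal_tsum, Complex.ofReal_div, Complex.ofReal_pow]

end QExponential

section CoherentStates

variable {q : ℝ}

theorem conj_coh_mul_coh (hq : |q| < 1) (z z' : ℂ) (n : ℕ) :
    (starRingEnd ℂ) (coh q z' n) * coh q z n =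
      (((Real.sqrt (qexR q (‖z'‖ ^ 2)))⁻¹ * (Real.sqrt (qexR q (‖z‖ ^ 2)))⁻¹ : ℝ) : ℂ) *
        (((starRingEnd ℂ) z' * z) ^ n / (qfact q n : ℂ)) := by
  have hfact := qfact_pos hq n
  have hsqrt : ((Real.sqrt (qfact q n) : ℝ) : ℂ) * ((Real.sqrt (qfact q n) : ℝ) : ℂ)
      = (qfact q n : ℂ) := by
    rw [← Complex.ofReal_mul, Real.mul_self_sqrt hfact.le]
  have hsqrt_ne : ((Real.sqrt (qfact q n) : ℝ) : ℂ) ≠ 0 :=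
    Complex.ofReal_ne_zero.mpr (Real.sqrt_pos.mpr hfact).ne'
  have hfact_ne : (qfact q n : ℂ) ≠ 0 := Complex.ofReal_ne_zero.mpr hfact.ne'
  simp only [coh, map_div₀, map_mul, map_pow, Complex.conj_ofReal]
  push_cast
  field_simp
  rw [mul_pow, ← hsqrt]
  ring

theorem tsum_conj_coh_mul_coh (hq : |q| < 1) (z z' : ℂ) :
    (∑' n : ℕ, (starRingEnd ℂ) (coh q z' n) * coh q z n) =
      (((Real.sqrt (qexR q (‖z'‖ ^ 2) * qexR q (‖z‖ ^ 2)))⁻¹ : ℝ) : ℂ) *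
        qexC q ((starRingEnd ℂ) z' * z) := by
  rw [tsum_congr (conj_coh_mul_coh hq z z'), tsum_mul_left,
    Real.sqrt_mul (qexR_nonneg hq (by positivity)), mul_inv]
  rfl

theorem tsum_conj_coh_mul_coh_self (hq : |q| < 1) {z : ℂ} (hz : ‖z‖ ^ 2 < 1 / (1 - q)) :
    (∑' n : ℕ, (starRingEnd ℂ) (coh q z n) * coh q z n) = 1 := by
  have hpos : 0 < qexR q (‖z‖ ^ 2) :=
    one_pos.trans_le (one_le_qexR hq (by positivity) hz)
  rw [tsum_conj_coh_mul_coh hq, Complex.conj_mul', ← Complex.ofReal_pow, qexC_ofReal,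
    Real.sqrt_mul_self hpos.le, ← Complex.ofReal_mul, inv_mul_cancel₀ hpos.ne',
    Complex.ofReal_one]

end CoherentStates

theorem norm_conj_mul_lt_of_sq_norm_lt {z z' : ℂ} {R : ℝ} (hz : ‖z‖ ^ 2 < R)
    (hz' : ‖z'‖ ^ 2 < R) : ‖(starRingEnd ℂ) z' * z‖ < R := by
  rw [norm_mul, RCLike.norm_conj]
  nlinarith [sq_nonneg (‖z‖ - ‖z'‖)]

/-- for `|z|² < R` and `|z'|² < R`, one has `|conj(z') z| < R` (so the
right-hand side is defined) and the ℓ² inner product of the q-coherent states is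
`⟨c_{z'}, c_z⟩ = (e_q(|z'|²) e_q(|z|²))^{-1/2} e_q(conj(z') z)`;
in particular `⟨c_z, c_z⟩ = 1`. -/
theorem coherent_state_overlap (q : ℝ) (hq0 : 0 < q) (hq1 : q < 1) (z z' : ℂ)
    (hz : ‖z‖ ^ 2 < 1 / (1 - q)) (hz' : ‖z'‖ ^ 2 < 1 / (1 - q)) :
    ‖(starRingEnd ℂ) z' * z‖ < 1 / (1 - q) ∧
    (∑' n : ℕ, (starRingEnd ℂ) (coh q z' n) * coh q z n) =
      (((Real.sqrt (qexR q (‖z'‖ ^ 2) * qexR q (‖z‖ ^ 2)))⁻¹ : ℝ) : ℂ) *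
        qexC q ((starRingEnd ℂ) z' * z) ∧
    (∑' n : ℕ, (starRingEnd ℂ) (coh q z n) * coh q z n) = 1 := by
  have hq : |q| < 1 := abs_lt.mpr ⟨by linarith, hq1⟩
  exact ⟨norm_conj_mul_lt_of_sq_norm_lt hz hz', tsum_conj_coh_mul_coh hq z z',
    tsum_conj_coh_mul_coh_self hq hz⟩
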